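/- The eigenvalues of the Jacobian Df(β,v) of the flux f(β,v) = (v·B₁(β), v²·B₂(β)) are λ± = 2v·B₂(β) ± v·√(B₁(β)·B₂'(β)); in particular, both eigenvalues have real part equal to 2v·B₂(β) when ρ₂ ≤ β ≤ ρ₁. -/
import Mathlib


open Complex in
/-- The eigenvalues of the Jacobian `Df(β,v) = [[v B₁'(β), B₁(β)], [v² B₂'(β), 2v B₂(β)]]`
of the flux `f(β,v) = (v B₁(β), v² B₂(β))` are `λ± = 2v B₂(β) ± v √(B₁(β) B₂'(β))`
(roots of the characteristic polynomial, over `ℂ`), and since `B₁(β) B₂'(β) ≤ 0` for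
`ρ₂ ≤ β ≤ ρ₁`, both eigenvalues have real part `2v B₂(β)`. -/
theorem stmt_2 (ρ₁ ρ₂ β v : ℝ) (hρ₂ : 0 < ρ₂) (hρ : ρ₂ < ρ₁)
    (hβ₁ : ρ₂ ≤ β) (hβ₂ : β ≤ ρ₁)
    (B₁ B₂ B₁' B₂' : ℝ → ℝ)
    (hB₁ : B₁ = fun b => (b - ρ₁) * (b - ρ₂) / b)
    (hB₂ : B₂ = fun b => (b ^ 2 - ρ₁ * ρ₂) / (2 * b ^ 2))
    (hB₁' : B₁' = fun b => 2 * B₂ b)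
    (hB₂' : B₂' = fun b => ρ₁ * ρ₂ / b ^ 3)
    (lamp lamm : ℂ)
    (hlamp : lamp = (2 * v * B₂ β : ℝ) + (v : ℂ) * Complex.I * (Real.sqrt (-(B₁ β * B₂' β)) : ℝ))
    (hlamm : lamm = (2 * v * B₂ β : ℝ) - (v : ℂ) * Complex.I * (Real.sqrt (-(B₁ β * B₂' β)) : ℝ)) :
    (lamp - (v * B₁' β : ℝ)) * (lamp - (2 * v * B₂ β : ℝ)) - (B₁ β : ℝ) * (v ^ 2 * B₂' β : ℝ) = 0 ∧
    (lamm - (v * B₁' β : ℝ)) * (lamm - (2 * v * B₂ β : ℝ)) - (B₁ β : ℝ) * (v ^ 2 * B₂' β : ℝ) = 0 ∧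
    lamp.re = 2 * v * B₂ β ∧ lamm.re = 2 * v * B₂ β := by
  have hβpos : 0 < β := lt_of_lt_of_le hρ₂ hβ₁
  have hnn : 0 ≤ -(B₁ β * B₂' β) := by
    have h1 : B₁ β ≤ 0 := by
      rw [hB₁]
      apply div_nonpos_of_nonpos_of_nonneg _ hβpos.le
      exact mul_nonpos_of_nonpos_of_nonneg (by linarith) (by linarith)
    have h2 : 0 ≤ B₂' β := by
      rw [hB₂']
      have hρ₁ : 0 < ρ₁ := hρ₂.trans hρ
      positivity
    nlinarith
  set s := Real.sqrt (-(B₁ β * B₂' β)) with hsdef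
  have hs : (s : ℝ) ^ 2 = -(B₁ β * B₂' β) := Real.sq_sqrt hnn
  have hB1' : B₁' β = 2 * B₂ β := by rw [hB₁']
  have hsC : ((s : ℂ)) ^ 2 = (-(B₁ β * B₂' β) : ℝ) := by
    norm_cast
  have key : ∀ lam : ℂ, lam = (2 * v * B₂ β : ℝ) + (v : ℂ) * Complex.I * (s : ℝ) ∨
      lam = (2 * v * B₂ β : ℝ) - (v : ℂ) * Complex.I * (s : ℝ) →
      (lam - (v * B₁' β : ℝ)) * (lam - (2 * v * B₂ β : ℝ)) - (B₁ β : ℝ) * (v ^ 2 * B₂' β : ℝ) = 0 := by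
    intro lam hl
    have : (lam - (2 * v * B₂ β : ℝ)) ^ 2 = -((v:ℂ)^2 * (s:ℂ)^2) := by
      rcases hl with h | h <;> rw [h] <;> ring_nf <;> rw [Complex.I_sq] <;> ring
    have h2 : (lam - (v * B₁' β : ℝ)) = (lam - (2 * v * B₂ β : ℝ)) := by
      rw [hB1']; push_cast; ring_nf
    rw [h2, ← sq, this, hsC]
    push_cast
    ring
  refine ⟨key lamp (Or.inl hlamp), key lamm (Or.inr hlamm), ?_, ?_⟩
  · rw [hlamp]; simp
  · rw [hlamm]; simp
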